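/- arXiv:1505.07150 — 3 statements merged into one kernel-verified Lean document; each statement's English description precedes it below -/
import Mathlib

section
/- Let E be a separable complex Hilbert space. Suppose H_n : 𝕋^d → B(E) is a sequence of strongly measurable families with ‖H_n(x)‖ ≤ C for almost every x and all n, and suppose 𝓗 is a bounded operator on L²(𝕋^d; E) such that for every f ∈ L²(𝕋^d; E), ∫_{𝕋^d} ‖H_n(x)(f(x)) − (𝓗f)(x)‖² dx → 0 as n → ∞ (i.e., the induced decomposable operators converge strongly to 𝓗). Then 𝓗 is decomposable: there exists a strongly measurable family H : 𝕋^d → B(E) with ‖H(x)‖ ≤ C almost everywhere such that (𝓗f)(x) = H(x)(f(x)) for almost every x, for every f; moreover there exist a subsequence n_k and a full-measure subset 𝕋₀ ⊂ 𝕋^d such that H_{n_k}(x)v → H(x)v for every x ∈ 𝕋₀ and every v ∈ E. -/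
open MeasureTheory Filter Topology ENNReal

/-!
Test the strong convergence on the constant functions `x ↦ vᵢ`, for a dense sequence `(vᵢ)` in
`E`: convergence in `L²` gives, after a diagonal extraction, one subsequence `H_{n_k}` such that
`H_{n_k}(x) vᵢ` converges for all `i` and almost every `x`. Since the `H_{n_k}(x)` are uniformly
bounded, they then converge strongly on all of `E` to an operator `H(x)` of norm `≤ C`, measurable
in `x` as a pointwise limit. For any `f ∈ L²`, a further subsequence of `H_{n_k}(x) (f x)` converges
almost everywhere to `(𝓗 f)(x)`, and comparing the two limits gives `(𝓗 f)(x) = H(x) (f x)`.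
-/

namespace ContinuousLinearMap

variable {𝕜 E F : Type*} [NontriviallyNormedField 𝕜] [SeminormedAddCommGroup E] [NormedSpace 𝕜 E]
  [NormedAddCommGroup F] [NormedSpace 𝕜 F] {ι : Type*} {T : ℕ → E →L[𝕜] F} {C : ℝ}

theorem cauchySeq_apply_of_denseRange (hT : ∀ k, ‖T k‖ ≤ C) {v : ι → E} (hv : DenseRange v)
    (hcauchy : ∀ i, CauchySeq fun k => T k (v i)) (w : E) : CauchySeq fun k => T k w := by
  -- Being Cauchy is convergence of `G · w` to `0`, a closed condition on `w` since `G` is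
  -- equicontinuous.
  let G : ℕ × ℕ → E →L[𝕜] F := fun p => T p.1 - T p.2
  have hGbound : ∃ C', ∀ p, ‖G p‖ ≤ C' :=
    ⟨C + C, fun p => (norm_sub_le _ _).trans (add_le_add (hT _) (hT _))⟩
  have hG : Equicontinuous ((↑) ∘ G) := ((NormedSpace.equicontinuous_TFAE G).out 5 1).1 hGbound
  have hiff : ∀ w, CauchySeq (fun k => T k w) ↔ Tendsto (fun p => G p w) atTop (𝓝 0) := by
    intro w
    simp only [cauchySeq_iff_tendsto_dist_atTop_0, dist_eq_norm,
      tendsto_zero_iff_norm_tendsto_zero (f := fun p => G p w)]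
    rfl
  refine (hiff w).2 (hv.induction_on (p := fun w => Tendsto (fun p => G p w) atTop (𝓝 0)) w ?_
    fun i => (hiff _).1 (hcauchy i))
  exact hG.isClosed_setOfPred_tendsto (f := fun _ => 0) continuous_const

theorem exists_tendsto_apply_of_denseRange [CompleteSpace F] (hT : ∀ k, ‖T k‖ ≤ C) {v : ι → E}
    (hv : DenseRange v) (hconv : ∀ i, ∃ L, Tendsto (fun k => T k (v i)) atTop (𝓝 L)) :
    ∃ S : E →L[𝕜] F, ∀ w, Tendsto (fun k => T k w) atTop (𝓝 (S w)) := by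
  choose f hf using fun w => cauchySeq_tendsto_of_complete
    (cauchySeq_apply_of_denseRange hT hv (fun i => (hconv i).choose_spec.cauchySeq) w)
  have hTbound : ∃ C', ∀ k, ‖T k‖ ≤ C' := ⟨C, hT⟩
  have hTeq : Equicontinuous ((↑) ∘ T) := ((NormedSpace.equicontinuous_TFAE T).out 5 1).1 hTbound
  have hlim : Tendsto (fun k w => T k w) atTop (𝓝 f) := tendsto_pi_nhds.2 hf
  exact ⟨⟨linearMapOfTendsto f (fun k => (T k : E →ₗ[𝕜] F)) hlim,
    hlim.continuous_of_equicontinuous hTeq⟩, hf⟩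

theorem opNorm_le_of_tendsto_apply (hT : ∀ k, ‖T k‖ ≤ C) {S : E →L[𝕜] F}
    (hS : ∀ w, Tendsto (fun k => T k w) atTop (𝓝 (S w))) : ‖S‖ ≤ C :=
  S.opNorm_le_bound ((norm_nonneg _).trans (hT 0)) fun w =>
    le_of_tendsto (hS w).norm (Eventually.of_forall fun k => (T k).le_of_opNorm_le (hT k) w)

end ContinuousLinearMap

theorem ENNReal.tendsto_nhds_zero_of_tendsto_pow {α : Type*} {l : Filter α} {f : α → ℝ≥0∞}
    {n : ℕ} (hn : n ≠ 0) (h : Tendsto (fun a => f a ^ n) l (𝓝 0)) : Tendsto f l (𝓝 0) := by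
  have hpos : 0 < (n : ℝ)⁻¹ := inv_pos.2 (Nat.cast_pos.2 (Nat.pos_of_ne_zero hn))
  have := ((ENNReal.continuous_rpow_const (y := (n : ℝ)⁻¹)).tendsto 0).comp h
  simpa [Function.comp_def, ← ENNReal.rpow_natCast, ← ENNReal.rpow_mul, hn,
    ENNReal.zero_rpow_of_pos hpos] using this

namespace MeasureTheory

variable {X : Type*} [MeasurableSpace X] {μ : Measure X}

theorem ae_tendsto_zero_of_tsum_lintegral_ne_top {F : ℕ → X → ℝ≥0∞}
    (hF : ∀ n, AEMeasurable (F n) μ) (h : ∑' n, ∫⁻ x, F n x ∂μ ≠ ∞) :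
    ∀ᵐ x ∂μ, Tendsto (fun n => F n x) atTop (𝓝 0) := by
  rw [← lintegral_tsum hF] at h
  filter_upwards [ae_lt_top' (AEMeasurable.tsum hF) h] with x hx
  exact ENNReal.tendsto_atTop_zero_of_tsum_ne_top hx.ne

theorem exists_strictMono_forall_ae_tendsto_zero {F : ℕ → ℕ → X → ℝ≥0∞}
    (hF : ∀ i n, AEMeasurable (F i n) μ)
    (h : ∀ i, Tendsto (fun n => ∫⁻ x, F i n x ∂μ) atTop (𝓝 0)) :
    ∃ φ : ℕ → ℕ, StrictMono φ ∧ ∀ i, ∀ᵐ x ∂μ, Tendsto (fun k => F i (φ k) x) atTop (𝓝 0) := by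
  have hsmall : ∀ k, ∀ᶠ n in atTop, ∀ i ∈ Set.Iic k, ∫⁻ x, F i n x ∂μ ≤ 2⁻¹ ^ k := fun k =>
    (eventually_all_finite (Set.finite_Iic k)).2 fun i _ =>
      (h i).eventually (ge_mem_nhds (ENNReal.pow_pos (by norm_num) k))
  obtain ⟨φ, hφ, hφsmall⟩ := extraction_forall_of_eventually hsmall
  refine ⟨φ, hφ, fun i => ?_⟩
  have hsum : ∑' k, ∫⁻ x, F i (φ (k + i)) x ∂μ ≠ ∞ := by
    refine ne_top_of_le_ne_top (b := ∑' k : ℕ, (2⁻¹ : ℝ≥0∞) ^ k) (by simp)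
      (ENNReal.tsum_le_tsum fun k => ?_)
    exact (hφsmall (k + i) i (by simp)).trans
      (pow_le_pow_of_le_one (by simp) (by norm_num) (Nat.le_add_right k i))
  filter_upwards [ae_tendsto_zero_of_tsum_lintegral_ne_top (fun k => hF i (φ (k + i))) hsum]
    with x hx
  exact (tendsto_add_atTop_iff_nat i).1 hx

theorem tendsto_lintegral_enorm_sq_of_tendsto_integral {E : Type*} [NormedAddCommGroup E]
    {g : ℕ → X → E} (hg : ∀ n, MemLp (g n) 2 μ)
    (h : Tendsto (fun n => ∫ x, ‖g n x‖ ^ 2 ∂μ) atTop (𝓝 0)) :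
    Tendsto (fun n => ∫⁻ x, ‖g n x‖ₑ ^ 2 ∂μ) atTop (𝓝 0) := by
  have hint : ∀ n, ∫⁻ x, ‖g n x‖ₑ ^ 2 ∂μ = ENNReal.ofReal (∫ x, ‖g n x‖ ^ 2 ∂μ) := fun n => by
    rw [ofReal_integral_eq_lintegral_ofReal ((hg n).integrable_norm_pow two_ne_zero)
      (ae_of_all _ fun x => by positivity)]
    simp [ENNReal.ofReal_pow, ofReal_norm]
  simpa [hint] using ENNReal.tendsto_ofReal h

variable {𝕜 E F : Type*} [NontriviallyNormedField 𝕜] [NormedAddCommGroup E] [NormedSpace 𝕜 E]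
  [NormedAddCommGroup F] [NormedSpace 𝕜 F]

theorem exists_stronglyMeasurable_tendsto_on {T : ℕ → X → E →L[𝕜] F}
    (hT : ∀ n v, StronglyMeasurable fun x => T n x v) {s : Set X} (hs : MeasurableSet s)
    (hlim : ∀ x ∈ s, ∃ S : E →L[𝕜] F, ∀ v, Tendsto (fun n => T n x v) atTop (𝓝 (S v))) :
    ∃ H : X → E →L[𝕜] F, (∀ v, StronglyMeasurable fun x => H x v) ∧
      ∀ x ∈ s, ∀ v, Tendsto (fun n => T n x v) atTop (𝓝 (H x v)) := by
  have hchoice : ∀ x, ∃ S : E →L[𝕜] F,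
      (x ∈ s → ∀ v, Tendsto (fun n => T n x v) atTop (𝓝 (S v))) ∧ (x ∉ s → S = 0) := by
    intro x
    by_cases hx : x ∈ s
    · obtain ⟨S, hS⟩ := hlim x hx
      exact ⟨S, fun _ => hS, fun h => absurd hx h⟩
    · exact ⟨0, fun h => absurd h hx, fun _ => rfl⟩
  choose H hH hH0 using hchoice
  refine ⟨H, fun v => ?_, hH⟩
  refine stronglyMeasurable_of_tendsto atTop (fun n => (hT n v).indicator hs)
    (tendsto_pi_nhds.2 fun x => ?_)
  by_cases hx : x ∈ s
  · simpa [hx] using hH x hx v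
  · simp [hx, hH0 x hx]

section SecondCountable

variable [SecondCountableTopology E]

theorem AEStronglyMeasurable.clm_apply_of_stronglyMeasurable_apply {T : X → E →L[𝕜] F}
    (hT : ∀ v, StronglyMeasurable fun x => T x v) {u : X → E} (hu : AEStronglyMeasurable u μ) :
    AEStronglyMeasurable (fun x => T x (u x)) μ := by
  borelize E
  have hT' : StronglyMeasurable (Function.uncurry fun v x => T x v) :=
    stronglyMeasurable_uncurry_of_continuous_of_stronglyMeasurable (fun x => (T x).continuous) hT
  exact hT'.aestronglyMeasurable.comp_aemeasurable (hu.aemeasurable.prodMk aemeasurable_id)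

theorem MemLp.clm_apply_of_stronglyMeasurable_apply {p : ℝ≥0∞} {T : X → E →L[𝕜] F}
    (hT : ∀ v, StronglyMeasurable fun x => T x v) {C : ℝ}
    (hbound : ∀ᵐ x ∂μ, ‖T x‖ ≤ C) {u : X → E} (hu : MemLp u p μ) :
    MemLp (fun x => T x (u x)) p μ :=
  hu.of_le_mul (hu.1.clm_apply_of_stronglyMeasurable_apply hT)
    (hbound.mono fun x hx => (T x).le_of_opNorm_le hx (u x))

variable {T : ℕ → X → E →L[𝕜] F} {C : ℝ}

theorem exists_strictMono_forall_ae_tendsto_clm_apply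
    (hT : ∀ n v, StronglyMeasurable fun x => T n x v) (hbound : ∀ n, ∀ᵐ x ∂μ, ‖T n x‖ ≤ C)
    {u : ℕ → Lp E 2 μ} {w : ℕ → Lp F 2 μ}
    (hconv : ∀ i, Tendsto (fun n => ∫ x, ‖T n x (u i x) - w i x‖ ^ 2 ∂μ) atTop (𝓝 0)) :
    ∃ φ : ℕ → ℕ, StrictMono φ ∧
      ∀ i, ∀ᵐ x ∂μ, Tendsto (fun k => T (φ k) x (u i x)) atTop (𝓝 (w i x)) := by
  have hmem : ∀ i n, MemLp (fun x => T n x (u i x) - w i x) 2 μ := fun i n =>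
    ((Lp.memLp (u i)).clm_apply_of_stronglyMeasurable_apply (hT n) (hbound n)).sub (Lp.memLp (w i))
  obtain ⟨φ, hφ, hlim⟩ := exists_strictMono_forall_ae_tendsto_zero
    (fun i n => (hmem i n).1.enorm.pow_const 2)
    (fun i => tendsto_lintegral_enorm_sq_of_tendsto_integral (hmem i) (hconv i))
  refine ⟨φ, hφ, fun i => (hlim i).mono fun x hx => ?_⟩
  rw [← tendsto_sub_nhds_zero_iff, tendsto_zero_iff_enorm_tendsto_zero]
  exact ENNReal.tendsto_nhds_zero_of_tendsto_pow two_ne_zero hx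

theorem ae_eq_clm_apply_of_tendsto_integral
    (hT : ∀ n v, StronglyMeasurable fun x => T n x v) (hbound : ∀ n, ∀ᵐ x ∂μ, ‖T n x‖ ≤ C)
    {H : X → E →L[𝕜] F} (hlim : ∀ᵐ x ∂μ, ∀ v, Tendsto (fun n => T n x v) atTop (𝓝 (H x v)))
    {u : Lp E 2 μ} {w : Lp F 2 μ}
    (hconv : Tendsto (fun n => ∫ x, ‖T n x (u x) - w x‖ ^ 2 ∂μ) atTop (𝓝 0)) :
    ∀ᵐ x ∂μ, w x = H x (u x) := by
  obtain ⟨φ, hφ, hae⟩ := exists_strictMono_forall_ae_tendsto_clm_apply hT hbound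
    (u := fun _ => u) (w := fun _ => w) fun _ => hconv
  filter_upwards [hae 0, hlim] with x hx hHx
  exact tendsto_nhds_unique hx ((hHx (u x)).comp hφ.tendsto_atTop)

end SecondCountable

theorem exists_decomposable_of_tendsto_integral [IsFiniteMeasure μ]
    [TopologicalSpace.SeparableSpace E] [CompleteSpace F]
    (T : ℕ → X → E →L[𝕜] F) (C : ℝ) (hT : ∀ n v, StronglyMeasurable fun x => T n x v)
    (hbound : ∀ n, ∀ᵐ x ∂μ, ‖T n x‖ ≤ C) (𝓗 : Lp E 2 μ → Lp F 2 μ)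
    (hconv : ∀ u : Lp E 2 μ, Tendsto (fun n => ∫ x, ‖T n x (u x) - 𝓗 u x‖ ^ 2 ∂μ) atTop (𝓝 0)) :
    ∃ H : X → E →L[𝕜] F, (∀ v, StronglyMeasurable fun x => H x v) ∧
      (∀ᵐ x ∂μ, ‖H x‖ ≤ C) ∧ (∀ u : Lp E 2 μ, ∀ᵐ x ∂μ, 𝓗 u x = H x (u x)) ∧
      ∃ φ : ℕ → ℕ, StrictMono φ ∧ ∃ s : Set X, μ sᶜ = 0 ∧
        ∀ x ∈ s, ∀ v, Tendsto (fun k => T (φ k) x v) atTop (𝓝 (H x v)) := by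
  have : SecondCountableTopology E := UniformSpace.secondCountable_of_separable E
  let v := TopologicalSpace.denseSeq E
  obtain ⟨φ, hφ, hconst⟩ := exists_strictMono_forall_ae_tendsto_clm_apply hT hbound
    (u := fun i => Lp.const 2 μ (v i)) fun i => hconv _
  have hgood : ∀ᵐ x ∂μ, (∀ n, ‖T n x‖ ≤ C) ∧
      ∀ i, ∃ L, Tendsto (fun k => T (φ k) x (v i)) atTop (𝓝 L) := by
    refine (ae_all_iff.2 hbound).and (ae_all_iff.2 fun i => ?_)
    filter_upwards [hconst i, Lp.coeFn_const 2 μ (v i)] with x hx hvx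
    exact ⟨_, by rwa [hvx, Function.const_apply] at hx⟩
  obtain ⟨s, hs_ae, hs, hgood_s⟩ := hgood.exists_measurable_mem
  obtain ⟨H, hHmeas, hHlim⟩ := exists_stronglyMeasurable_tendsto_on (fun k => hT (φ k)) hs
    fun x hx => ContinuousLinearMap.exists_tendsto_apply_of_denseRange
      (fun k => (hgood_s x hx).1 (φ k)) (TopologicalSpace.denseRange_denseSeq E) (hgood_s x hx).2
  have hHbound : ∀ x ∈ s, ‖H x‖ ≤ C := fun x hx =>
    ContinuousLinearMap.opNorm_le_of_tendsto_apply (fun k => (hgood_s x hx).1 (φ k)) (hHlim x hx)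
  refine ⟨H, hHmeas, mem_of_superset hs_ae hHbound, fun u => ?_, φ, hφ, s,
    mem_ae_iff.1 hs_ae, hHlim⟩
  exact ae_eq_clm_apply_of_tendsto_integral (fun k => hT (φ k)) (fun k => hbound (φ k))
    (mem_of_superset hs_ae hHlim) ((hconv u).comp hφ.tendsto_atTop)

end MeasureTheory

/-- If the decomposable operators induced by a uniformly bounded sequence
of strongly measurable operator families `Hₙ : 𝕋^d → B(E)` converge strongly on
`L²(𝕋^d; E)` to a bounded operator `𝓗`, then `𝓗` is decomposable, with fibers bounded by
the same constant, and some subsequence of the fibers `H_{n_k}(x)` converges strongly to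
the fiber `H(x)` for every `x` in a full-measure set `𝕋₀`. -/
theorem strong_limit_of_decomposable_is_decomposable
    {E : Type*} [NormedAddCommGroup E] [InnerProductSpace ℂ E] [CompleteSpace E]
    [TopologicalSpace.SeparableSpace E]
    {d : ℕ} (Hn : ℕ → (Fin d → AddCircle (1:ℝ)) → (E →L[ℂ] E)) (C : ℝ)
    (hmeasn : ∀ (n : ℕ) (v : E), StronglyMeasurable fun x => Hn n x v)
    (hbound : ∀ n : ℕ,
      ∀ᵐ x ∂(volume : Measure (Fin d → AddCircle (1:ℝ))), ‖Hn n x‖ ≤ C)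
    (𝓗 : Lp E 2 (volume : Measure (Fin d → AddCircle (1:ℝ))) →L[ℂ]
      Lp E 2 (volume : Measure (Fin d → AddCircle (1:ℝ))))
    (hconv : ∀ f : Lp E 2 (volume : Measure (Fin d → AddCircle (1:ℝ))),
      Tendsto (fun n => ∫ x, ‖Hn n x (f x) - (𝓗 f) x‖ ^ 2 ∂volume) atTop (nhds 0)) :
    ∃ H : (Fin d → AddCircle (1:ℝ)) → (E →L[ℂ] E),
      (∀ v : E, StronglyMeasurable fun x => H x v) ∧
      (∀ᵐ x ∂(volume : Measure (Fin d → AddCircle (1:ℝ))), ‖H x‖ ≤ C) ∧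
      (∀ f : Lp E 2 (volume : Measure (Fin d → AddCircle (1:ℝ))),
        ∀ᵐ x ∂(volume : Measure (Fin d → AddCircle (1:ℝ))), (𝓗 f) x = H x (f x)) ∧
      ∃ nk : ℕ → ℕ, StrictMono nk ∧
        ∃ 𝕋₀ : Set (Fin d → AddCircle (1:ℝ)), volume 𝕋₀ᶜ = 0 ∧
          ∀ x ∈ 𝕋₀, ∀ v : E,
            Tendsto (fun k => Hn (nk k) x v) atTop (nhds (H x v)) :=
  exists_decomposable_of_tendsto_integral Hn C hmeasn hbound 𝓗 hconv
end

section
/- Let E be a separable complex Hilbert space, let H : 𝕋^d → B(E) be strongly measurable with ‖H(x)‖ ≤ C almost everywhere, and let 𝓗 be the induced decomposable operator on L²(𝕋^d; E), i.e., (𝓗f)(x) = H(x)(f(x)) almost everywhere for every f. Then 𝓗 has trivial kernel if and only if H(x) has trivial kernel for almost every x ∈ 𝕋^d. -/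
/-!
The nontrivial direction needs, on a non-null set where `ker H(x) ≠ 0`, a measurable choice of
nonzero kernel vectors. For a fixed `v`, the projection of `v` onto `ker H(x)` is measurable in
`x`: by von Neumann's mean ergodic theorem it is the limit of the Birkhoff averages of the
contraction `1 - r H(x)* H(x)`, whose fixed vectors are exactly `ker H(x)`. Projecting a dense
sequence gives countably many bounded kernel sections, at least one of which is nonzero wherever
`ker H(x) ≠ 0`; so one of them is nonzero on a set of positive measure and lies in `ker 𝓗`.
-/

open MeasureTheory Filter Topology ContinuousLinearMap
open scoped ENNReal

namespace ContinuousLinearMap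

variable {𝕜 E : Type*} [RCLike 𝕜] [NormedAddCommGroup E] [InnerProductSpace 𝕜 E] [CompleteSpace E]

noncomputable def kernelContraction (B : E →L[𝕜] E) (r : ℝ) : E →L[𝕜] E :=
  1 - (r : 𝕜) • (adjoint B ∘L B)

variable {B : E →L[𝕜] E} {r : ℝ}

lemma kernelContraction_apply (v : E) :
    kernelContraction B r v = v - (r : 𝕜) • adjoint B (B v) := rfl

lemma norm_kernelContraction_le_one (hr : 0 ≤ r) (hrB : r * ‖B‖ ^ 2 ≤ 1) :
    ‖kernelContraction B r‖ ≤ 1 := by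
  refine opNorm_le_bound _ zero_le_one fun v => ?_
  have hBB : ‖adjoint B (B v)‖ ≤ ‖B‖ * ‖B v‖ := by
    simpa only [LinearIsometryEquiv.norm_map] using (adjoint B).le_opNorm (B v)
  have hsq : ‖kernelContraction B r v‖ ^ 2
      = ‖v‖ ^ 2 - 2 * r * ‖B v‖ ^ 2 + r ^ 2 * ‖adjoint B (B v)‖ ^ 2 := by
    rw [kernelContraction_apply, @norm_sub_sq 𝕜, inner_smul_right, adjoint_inner_right,
      inner_self_eq_norm_sq_to_K, norm_smul]
    simp only [RCLike.re_ofReal_mul, RCLike.norm_ofReal, abs_of_nonneg hr, ← RCLike.ofReal_pow,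
      RCLike.ofReal_re]
    ring
  have hr2 : r ^ 2 * ‖adjoint B (B v)‖ ^ 2 ≤ r * ‖B v‖ ^ 2 :=
    calc r ^ 2 * ‖adjoint B (B v)‖ ^ 2 ≤ r ^ 2 * (‖B‖ * ‖B v‖) ^ 2 := by gcongr
      _ = r * (r * ‖B‖ ^ 2) * ‖B v‖ ^ 2 := by ring
      _ ≤ r * 1 * ‖B v‖ ^ 2 := by gcongr
      _ = r * ‖B v‖ ^ 2 := by ring
  rw [one_mul]
  refine le_of_sq_le_sq ?_ (norm_nonneg v)
  nlinarith [sq_nonneg ‖B v‖]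

lemma eqLocus_kernelContraction (hr : r ≠ 0) :
    LinearMap.eqLocus (kernelContraction B r : E →ₗ[𝕜] E) (1 : E →L[𝕜] E) =
      LinearMap.ker (B : E →ₗ[𝕜] E) := by
  ext v
  have := congr(v ∈ $(ker_adjoint_comp_self B))
  simpa [kernelContraction_apply, hr] using this

lemma tendsto_birkhoffAverage_kernelContraction (hr : 0 < r) (hrB : r * ‖B‖ ^ 2 ≤ 1) (v : E) :
    Tendsto (birkhoffAverage 𝕜 (kernelContraction B r) id · v) atTop
      (𝓝 ((LinearMap.ker (B : E →ₗ[𝕜] E)).starProjection v)) := by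
  have := tendsto_birkhoffAverage_orthogonalProjection _ (norm_kernelContraction_le_one hr.le hrB) v
  rw [← Submodule.starProjection_apply] at this
  simpa only [eqLocus_kernelContraction hr.ne'] using this

end ContinuousLinearMap

lemma Submodule.exists_starProjection_ne_zero_of_denseRange {𝕜 E : Type*} [RCLike 𝕜]
    [NormedAddCommGroup E] [InnerProductSpace 𝕜 E] (K : Submodule 𝕜 E) [K.HasOrthogonalProjection]
    (hK : K ≠ ⊥) {u : ℕ → E} (hu : DenseRange u) : ∃ n, K.starProjection (u n) ≠ 0 := by
  by_contra! h
  have hzero : ⇑K.starProjection = 0 :=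
    hu.equalizer K.starProjection.continuous continuous_const (funext h)
  refine hK ((Submodule.eq_bot_iff K).2 fun v hv => ?_)
  rw [← K.starProjection_eq_self_iff.2 hv, hzero, Pi.zero_apply]

section Measurability

variable {𝕜 X E : Type*} [RCLike 𝕜] [MeasurableSpace X] [NormedAddCommGroup E]
  [InnerProductSpace 𝕜 E] [TopologicalSpace.SeparableSpace E]

lemma Orthonormal.countable {ι : Type*} {b : ι → E} (hb : Orthonormal 𝕜 b) : Countable ι := by
  refine Pairwise.countable_of_isOpen_disjoint (s := fun i => Metric.ball (b i) (1 / 2))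
    (fun i j hij => Metric.ball_disjoint_ball ?_) (fun _ => Metric.isOpen_ball)
    (fun _ => Metric.nonempty_ball.2 one_half_pos)
  have hsq : ‖b i - b j‖ ^ 2 = 2 := by
    rw [@norm_sub_sq 𝕜, hb.inner_eq_zero hij, hb.1 i, hb.1 j]
    norm_num
  rw [dist_eq_norm]
  nlinarith [norm_nonneg (b i - b j)]

lemma stronglyMeasurable_of_forall_inner [CompleteSpace E] {f : X → E}
    (hf : ∀ w, StronglyMeasurable fun x => inner 𝕜 w (f x)) : StronglyMeasurable f := by
  obtain ⟨ι, b, -⟩ := exists_hilbertBasis 𝕜 E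
  have := b.orthonormal.countable
  refine stronglyMeasurable_of_tendsto atTop
    (f := fun (s : Finset ι) x => ∑ i ∈ s, inner 𝕜 (b i) (f x) • b i)
    (fun s => Finset.stronglyMeasurable_fun_sum s fun i _ => (hf (b i)).smul_const (b i))
    (tendsto_pi_nhds.2 fun x => ?_)
  have hsum := b.hasSum_repr (f x)
  simp only [b.repr_apply_apply] at hsum
  exact hsum

variable {G : X → E →L[𝕜] E}

lemma stronglyMeasurable_clm_apply (hG : ∀ v, StronglyMeasurable fun x => G x v)
    {f : X → E} (hf : StronglyMeasurable f) : StronglyMeasurable fun x => G x (f x) := by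
  borelize E
  exact (stronglyMeasurable_uncurry_of_continuous_of_stronglyMeasurable
    (fun x => (G x).continuous) hG).comp_measurable (hf.measurable.prodMk measurable_id)

lemma stronglyMeasurable_birkhoffAverage_apply (hG : ∀ v, StronglyMeasurable fun x => G x v)
    (n : ℕ) (v : E) : StronglyMeasurable fun x => birkhoffAverage 𝕜 (G x) id n v := by
  have hiter : ∀ k, StronglyMeasurable fun x => (G x)^[k] v := by
    intro k
    induction k with
    | zero => exact stronglyMeasurable_const
    | succ k ih =>
      simp only [Function.iterate_succ_apply']
      exact stronglyMeasurable_clm_apply hG ih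
  exact (Finset.stronglyMeasurable_fun_sum _ fun k _ => hiter k).const_smul _

variable [CompleteSpace E]

lemma stronglyMeasurable_adjoint_apply (hG : ∀ v, StronglyMeasurable fun x => G x v) (v : E) :
    StronglyMeasurable fun x => adjoint (G x) v :=
  stronglyMeasurable_of_forall_inner (𝕜 := 𝕜) fun w => by
    simpa only [adjoint_inner_right] using (hG w).inner (𝕜 := 𝕜) stronglyMeasurable_const

lemma stronglyMeasurable_kernelContraction_apply (hG : ∀ v, StronglyMeasurable fun x => G x v)
    (r : ℝ) (v : E) : StronglyMeasurable fun x => kernelContraction (G x) r v :=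
  stronglyMeasurable_const.sub
    ((stronglyMeasurable_clm_apply (stronglyMeasurable_adjoint_apply hG) (hG v)).const_smul _)

lemma aestronglyMeasurable_starProjection_ker {μ : Measure X} {C : ℝ}
    (hG : ∀ v, StronglyMeasurable fun x => G x v) (hbound : ∀ᵐ x ∂μ, ‖G x‖ ≤ C) (v : E) :
    AEStronglyMeasurable (fun x => (LinearMap.ker (G x : E →ₗ[𝕜] E)).starProjection v) μ := by
  have hr : 0 < (C ^ 2 + 1)⁻¹ := by positivity
  refine aestronglyMeasurable_of_tendsto_ae atTop (fun n =>
    (stronglyMeasurable_birkhoffAverage_apply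
      (stronglyMeasurable_kernelContraction_apply hG (C ^ 2 + 1)⁻¹) n v).aestronglyMeasurable) ?_
  filter_upwards [hbound] with x hx
  refine tendsto_birkhoffAverage_kernelContraction hr ?_ v
  rw [inv_mul_le_one₀ (by positivity)]
  nlinarith [norm_nonneg (G x)]

end Measurability

section Decomposable

variable {𝕜 X E : Type*} [RCLike 𝕜] [MeasurableSpace X] [NormedAddCommGroup E]
  [InnerProductSpace 𝕜 E] {μ : Measure X} {G : X → E →L[𝕜] E}

lemma exists_memLp_kernel_section [CompleteSpace E] [TopologicalSpace.SeparableSpace E]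
    [IsFiniteMeasure μ] {C : ℝ} (hG : ∀ v, StronglyMeasurable fun x => G x v)
    (hbound : ∀ᵐ x ∂μ, ‖G x‖ ≤ C) (hker : ¬ ∀ᵐ x ∂μ, LinearMap.ker (G x : E →ₗ[𝕜] E) = ⊥)
    (p : ℝ≥0∞) : ∃ g : X → E, MemLp g p μ ∧ (∀ x, G x (g x) = 0) ∧ ¬ g =ᵐ[μ] 0 := by
  obtain ⟨u, hu⟩ := TopologicalSpace.exists_dense_seq E
  let P : ℕ → X → E := fun n x => (LinearMap.ker (G x : E →ₗ[𝕜] E)).starProjection (u n)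
  have hP_ker : ∀ n x, G x (P n x) = 0 := fun n x =>
    LinearMap.mem_ker.1 (Submodule.starProjection_apply_mem _ _)
  obtain ⟨n, hn⟩ : ∃ n, ¬ P n =ᵐ[μ] 0 := by
    by_contra! hzero
    refine hker ((ae_all_iff.2 hzero).mono fun x hx => ?_)
    by_contra hne
    obtain ⟨n, hn⟩ := Submodule.exists_starProjection_ne_zero_of_denseRange _ hne hu
    exact hn (hx n)
  refine ⟨P n, ?_, hP_ker n, hn⟩
  exact (memLp_top_of_bound (aestronglyMeasurable_starProjection_ker hG hbound (u n)) ‖u n‖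
    (.of_forall fun x => Submodule.norm_starProjection_apply_le _ _)).mono_exponent le_top

variable {p : ℝ≥0∞} [Fact (1 ≤ p)] {𝓗 : Lp E p μ →L[𝕜] Lp E p μ}

lemma ker_eq_bot_of_ae_ker_eq_bot (hdec : ∀ f : Lp E p μ, ∀ᵐ x ∂μ, 𝓗 f x = G x (f x))
    (hker : ∀ᵐ x ∂μ, LinearMap.ker (G x : E →ₗ[𝕜] E) = ⊥) :
    LinearMap.ker (𝓗 : Lp E p μ →ₗ[𝕜] Lp E p μ) = ⊥ := by
  refine LinearMap.ker_eq_bot'.2 fun f hf => Lp.ext ?_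
  have h𝓗f : ⇑(𝓗 f) =ᵐ[μ] 0 := by
    rw [show 𝓗 f = 0 from hf]
    exact Lp.coeFn_zero E p μ
  filter_upwards [hdec f, hker, h𝓗f, Lp.coeFn_zero E p μ] with x hfx hx h𝓗fx h0
  rw [h0, Pi.zero_apply]
  exact LinearMap.ker_eq_bot'.1 hx _ (hfx ▸ h𝓗fx)

lemma ae_ker_eq_bot_of_ker_eq_bot [CompleteSpace E] [TopologicalSpace.SeparableSpace E]
    [IsFiniteMeasure μ] {C : ℝ} (hG : ∀ v, StronglyMeasurable fun x => G x v)
    (hbound : ∀ᵐ x ∂μ, ‖G x‖ ≤ C) (hdec : ∀ f : Lp E p μ, ∀ᵐ x ∂μ, 𝓗 f x = G x (f x))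
    (hker : LinearMap.ker (𝓗 : Lp E p μ →ₗ[𝕜] Lp E p μ) = ⊥) :
    ∀ᵐ x ∂μ, LinearMap.ker (G x : E →ₗ[𝕜] E) = ⊥ := by
  by_contra h
  obtain ⟨g, hg, hg_ker, hg_ne⟩ := exists_memLp_kernel_section hG hbound h p
  have h𝓗g : 𝓗 (hg.toLp g) = 0 := by
    refine Lp.ext ?_
    filter_upwards [hdec (hg.toLp g), hg.coeFn_toLp, Lp.coeFn_zero E p μ] with x h𝓗gx hgx h0
    rw [h𝓗gx, hgx, hg_ker, h0, Pi.zero_apply]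
  have hg0 : hg.toLp g = 0 := LinearMap.ker_eq_bot'.1 hker _ h𝓗g
  exact hg_ne (hg.coeFn_toLp.symm.trans (hg0 ▸ Lp.coeFn_zero E p μ))

end Decomposable

/-- A decomposable operator `𝓗 = ∫⊕ H(x) dx` on `L²(𝕋^d; E)` has trivial
kernel if and only if `H(x)` has trivial kernel for almost every `x ∈ 𝕋^d`. -/
theorem decomposable_trivial_kernel_iff
    {E : Type*} [NormedAddCommGroup E] [InnerProductSpace ℂ E] [CompleteSpace E]
    [TopologicalSpace.SeparableSpace E]
    {d : ℕ} (H : (Fin d → AddCircle (1:ℝ)) → (E →L[ℂ] E)) (C : ℝ)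
    (hmeas : ∀ v : E, StronglyMeasurable fun x => H x v)
    (hbound : ∀ᵐ x ∂(volume : Measure (Fin d → AddCircle (1:ℝ))), ‖H x‖ ≤ C)
    (𝓗 : Lp E 2 (volume : Measure (Fin d → AddCircle (1:ℝ))) →L[ℂ]
      Lp E 2 (volume : Measure (Fin d → AddCircle (1:ℝ))))
    (hdec : ∀ f : Lp E 2 (volume : Measure (Fin d → AddCircle (1:ℝ))),
      ∀ᵐ x ∂(volume : Measure (Fin d → AddCircle (1:ℝ))), (𝓗 f) x = H x (f x)) :
    LinearMap.ker (𝓗 : Lp E 2 (volume : Measure (Fin d → AddCircle (1:ℝ))) →ₗ[ℂ]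
      Lp E 2 (volume : Measure (Fin d → AddCircle (1:ℝ)))) = ⊥ ↔
      (∀ᵐ x ∂(volume : Measure (Fin d → AddCircle (1:ℝ))),
        LinearMap.ker (H x : E →ₗ[ℂ] E) = ⊥) :=
  ⟨ae_ker_eq_bot_of_ker_eq_bot hmeas hbound hdec, ker_eq_bot_of_ae_ker_eq_bot hdec⟩
end

section
/- Let C₁, C₂ ∈ SL(2,ℝ), let s ∈ ℝ, and let S be the matrix with rows (s, −1) and (1, 0). Suppose that C₂ S C₁⁻¹ ∈ SO(2,ℝ) (a rotation matrix). Then the squared Hilbert–Schmidt (Frobenius) norm of C₁ satisfies ‖C₁‖²_HS = 1/Im(C₁⁻¹ · i) + 1/Im(C₂⁻¹ · i), where M · z denotes the Möbius action of M ∈ SL(2,ℝ) on the upper half-plane and i is the imaginary unit viewed as a point of the upper half-plane. -/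
open Matrix

/-- The Möbius action of a real 2×2 matrix on (a point of) the upper half-plane. -/
noncomputable def moebiusAct (M : Matrix (Fin 2) (Fin 2) ℝ) (z : ℂ) : ℂ :=
  ((M 0 0 : ℂ) * z + (M 0 1 : ℂ)) / ((M 1 0 : ℂ) * z + (M 1 1 : ℂ))

lemma im_inv_act (A : Matrix.SpecialLinearGroup (Fin 2) ℝ) :
    1 / (moebiusAct ((A⁻¹ : Matrix.SpecialLinearGroup (Fin 2) ℝ) :
        Matrix (Fin 2) (Fin 2) ℝ) Complex.I).im
      = (A : Matrix (Fin 2) (Fin 2) ℝ) 0 0 ^ 2 + (A : Matrix (Fin 2) (Fin 2) ℝ) 1 0 ^ 2 := by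
  set a := (A : Matrix (Fin 2) (Fin 2) ℝ) 0 0
  set b := (A : Matrix (Fin 2) (Fin 2) ℝ) 0 1
  set c := (A : Matrix (Fin 2) (Fin 2) ℝ) 1 0
  set d := (A : Matrix (Fin 2) (Fin 2) ℝ) 1 1
  have hdet : a * d - b * c = 1 := by
    have := A.property
    rwa [Matrix.det_fin_two] at this
  have hinv : ((A⁻¹ : Matrix.SpecialLinearGroup (Fin 2) ℝ) :
      Matrix (Fin 2) (Fin 2) ℝ) = !![d, -b; -c, a] := by
    rw [Matrix.SpecialLinearGroup.coe_inv, Matrix.adjugate_fin_two]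
  have hac : a ^ 2 + c ^ 2 ≠ 0 := by
    intro h
    have ha : a = 0 := by nlinarith [sq_nonneg a, sq_nonneg c]
    have hc : c = 0 := by nlinarith [sq_nonneg a, sq_nonneg c]
    rw [ha, hc] at hdet
    simp at hdet
  rw [hinv]
  unfold moebiusAct
  simp only [Matrix.cons_val', Matrix.cons_val_zero, Matrix.empty_val',
    Matrix.cons_val_fin_one, Matrix.cons_val_one, Matrix.head_cons, Matrix.head_fin_const,
    Matrix.of_apply]
  rw [Complex.div_im]
  simp [Complex.normSq_apply]
  have hac' : a * a + c * c ≠ 0 := by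
    intro h; exact hac (by nlinarith)
  have h1 : d * a / (a * a + c * c) - b * c / (a * a + c * c) = (a ^ 2 + c ^ 2)⁻¹ := by
    field_simp
    nlinarith [hdet]
  rw [h1, inv_inv]

/-- If `C₁, C₂ ∈ SL(2,ℝ)`, `S = [[s,−1],[1,0]]` and `C₂ S C₁⁻¹ ∈ SO(2,ℝ)`,
then `‖C₁‖²_HS = 1/Im(C₁⁻¹·i) + 1/Im(C₂⁻¹·i)`. -/
theorem hs_norm_sq_of_conjugated_to_rotation
    (C₁ C₂ : Matrix.SpecialLinearGroup (Fin 2) ℝ) (s : ℝ)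
    (S : Matrix (Fin 2) (Fin 2) ℝ) (hS : S = !![s, -1; 1, 0])
    (hrot : ∃ t : ℝ,
      (C₂ : Matrix (Fin 2) (Fin 2) ℝ) * S * ((C₁⁻¹ : Matrix.SpecialLinearGroup (Fin 2) ℝ) :
          Matrix (Fin 2) (Fin 2) ℝ) =
        !![Real.cos t, -Real.sin t; Real.sin t, Real.cos t]) :
    (∑ i : Fin 2, ∑ j : Fin 2, ((C₁ : Matrix (Fin 2) (Fin 2) ℝ) i j) ^ 2) =
      1 / (moebiusAct ((C₁⁻¹ : Matrix.SpecialLinearGroup (Fin 2) ℝ) :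
            Matrix (Fin 2) (Fin 2) ℝ) Complex.I).im +
      1 / (moebiusAct ((C₂⁻¹ : Matrix.SpecialLinearGroup (Fin 2) ℝ) :
            Matrix (Fin 2) (Fin 2) ℝ) Complex.I).im := by
  obtain ⟨t, ht⟩ := hrot
  have hmul : ((C₁⁻¹ : Matrix.SpecialLinearGroup (Fin 2) ℝ) :
      Matrix (Fin 2) (Fin 2) ℝ) * (C₁ : Matrix (Fin 2) (Fin 2) ℝ) = 1 := by
    rw [← Matrix.SpecialLinearGroup.coe_mul, inv_mul_cancel]
    rfl
  have key : (C₂ : Matrix (Fin 2) (Fin 2) ℝ) * S =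
      !![Real.cos t, -Real.sin t; Real.sin t, Real.cos t] * (C₁ : Matrix (Fin 2) (Fin 2) ℝ) := by
    have := congrArg (fun X => X * (C₁ : Matrix (Fin 2) (Fin 2) ℝ)) ht
    simpa only [mul_assoc, hmul, mul_one] using this
  have h01 := congrFun (congrFun key 0) 1
  have h11 := congrFun (congrFun key 1) 1
  simp [hS, Matrix.mul_apply, Fin.sum_univ_two] at h01 h11
  rw [im_inv_act C₁, im_inv_act C₂]
  simp only [Fin.sum_univ_two]
  have hpy := Real.sin_sq_add_cos_sq t
  have e0 : (C₂ : Matrix (Fin 2) (Fin 2) ℝ) 0 0 =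
      -(Real.cos t * (C₁ : Matrix (Fin 2) (Fin 2) ℝ) 0 1) +
        Real.sin t * (C₁ : Matrix (Fin 2) (Fin 2) ℝ) 1 1 := by linarith
  have e1 : (C₂ : Matrix (Fin 2) (Fin 2) ℝ) 1 0 =
      -(Real.sin t * (C₁ : Matrix (Fin 2) (Fin 2) ℝ) 0 1) -
        Real.cos t * (C₁ : Matrix (Fin 2) (Fin 2) ℝ) 1 1 := by linarith
  rw [e0, e1]
  linear_combination -((C₁ : Matrix (Fin 2) (Fin 2) ℝ) 0 1 ^ 2 +
    (C₁ : Matrix (Fin 2) (Fin 2) ℝ) 1 1 ^ 2) * hpy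
end
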